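/- Let R be a semiring, i : M → N a normal monomorphism of R-modules, and L a saturated submodule of M. Then L is a saturated submodule of N (identifying M with i(M)), and the induced map i' : M/L → N/L, [x] ↦ [i(x)], is a well-defined normal monomorphism. -/

import Mathlib

/-! The congruence of `i(L)` on `N` is read off in `M`: `x ~ y` iff `x + i a = y + i b` with
`a, b ∈ L`; by injectivity `i x ~ i y` iff `x ~ y`, so `i'` is injective. For both saturation
claims, saturation of `i(M)` first puts the unknown summand into the image of `i`; for `i(L)` one
then concludes in `M` using saturation of `L`. -/

/-- A submodule `N` of a module `M` over a semiring is *saturated* if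
`x + y ∈ N` and `y ∈ N` imply `x ∈ N`. -/
def SaturatedSub {R M : Type*} [Semiring R] [AddCommMonoid M] [Module R M]
    (N : Submodule R M) : Prop :=
  ∀ x y : M, x + y ∈ N → y ∈ N → x ∈ N

variable {R M : Type*} [Semiring R] [AddCommMonoid M] [Module R M]

/-- The congruence on `M` defined by a submodule `N`:
`x ~ y` iff `x + n = y + n'` for some `n, n' ∈ N`. -/
def quotCon (N : Submodule R M) : AddCon M where
  r x y := ∃ n ∈ N, ∃ n' ∈ N, x + n = y + n'
  iseqv := by
    constructor
    · intro x; exact ⟨0, N.zero_mem, 0, N.zero_mem, rfl⟩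
    · rintro x y ⟨n, hn, n', hn', h⟩; exact ⟨n', hn', n, hn, h.symm⟩
    · rintro x y z ⟨n, hn, n', hn', h1⟩ ⟨m, hm, m', hm', h2⟩
      refine ⟨n + m, N.add_mem hn hm, m' + n', N.add_mem hm' hn', ?_⟩
      calc x + (n + m) = x + n + m := (add_assoc _ _ _).symm
        _ = y + n' + m := by rw [h1]
        _ = y + m + n' := by rw [add_right_comm]
        _ = z + m' + n' := by rw [h2]
        _ = z + (m' + n') := add_assoc _ _ _
  add' := by
    rintro w x y z ⟨n, hn, n', hn', h1⟩ ⟨m, hm, m', hm', h2⟩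
    refine ⟨n + m, N.add_mem hn hm, n' + m', N.add_mem hn' hm', ?_⟩
    calc w + y + (n + m) = (w + n) + (y + m) := by rw [add_add_add_comm]
      _ = (x + n') + (z + m') := by rw [h1, h2]
      _ = x + z + (n' + m') := by rw [add_add_add_comm]

instance (N : Submodule R M) : SMul R (quotCon N).Quotient where
  smul r := Quotient.map' (fun m => r • m) (by
    rintro a b ⟨n, hn, n', hn', h⟩
    exact ⟨r • n, N.smul_mem r hn, r • n', N.smul_mem r hn', by
      rw [← smul_add, h, smul_add]⟩)

instance (N : Submodule R M) : Module R (quotCon N).Quotient where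
  one_smul x := Quotient.inductionOn' x fun m => congrArg Quotient.mk'' (one_smul R m)
  mul_smul r s x := Quotient.inductionOn' x fun m => congrArg Quotient.mk'' (mul_smul r s m)
  smul_zero r := congrArg Quotient.mk'' (smul_zero (a := r) : r • (0 : M) = 0)
  smul_add r x y := Quotient.inductionOn₂' x y fun m n => congrArg Quotient.mk'' (smul_add r m n)
  add_smul r s x := Quotient.inductionOn' x fun m => congrArg Quotient.mk'' (add_smul r s m)
  zero_smul x := Quotient.inductionOn' x fun m => congrArg Quotient.mk'' (zero_smul R m)

/-- The canonical projection `M → M/N` as a linear map. -/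
def mkLinear (N : Submodule R M) : M →ₗ[R] (quotCon N).Quotient where
  toFun := Quotient.mk''
  map_add' _ _ := rfl
  map_smul' _ _ := by exact rfl

section

variable {N : Type*} [AddCommMonoid N] [Module R N]

theorem SaturatedSub.map {L : Submodule R M} (hL : SaturatedSub L) {f : M →ₗ[R] N}
    (hf : Function.Injective f) (hsat : SaturatedSub (LinearMap.range f)) :
    SaturatedSub (L.map f) := by
  rintro x _ ⟨c, hc, hxy⟩ ⟨b, hb, rfl⟩
  obtain ⟨a, rfl⟩ := hsat x (f b) ⟨c, hxy⟩ ⟨b, rfl⟩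
  have hab : a + b = c := hf (by rw [map_add, hxy])
  exact ⟨a, hL a b (hab ▸ hc) hb, rfl⟩

theorem quotCon_map_iff (f : M →ₗ[R] N) (L : Submodule R M) {x y : N} :
    quotCon (L.map f) x y ↔ ∃ a ∈ L, ∃ b ∈ L, x + f a = y + f b := by
  constructor
  · rintro ⟨_, ⟨a, ha, rfl⟩, _, ⟨b, hb, rfl⟩, h⟩
    exact ⟨a, ha, b, hb, h⟩
  · rintro ⟨a, ha, b, hb, h⟩
    exact ⟨f a, ⟨a, ha, rfl⟩, f b, ⟨b, hb, rfl⟩, h⟩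

def quotMap (f : M →ₗ[R] N) (L : Submodule R M) :
    (quotCon L).Quotient →ₗ[R] (quotCon (L.map f)).Quotient where
  toFun := Quotient.map' f fun _ _ ⟨a, ha, b, hb, h⟩ =>
    (quotCon_map_iff f L).2 ⟨a, ha, b, hb, by rw [← map_add, h, map_add]⟩
  map_add' x y := Quotient.inductionOn₂' x y fun u v => congrArg Quotient.mk'' (map_add f u v)
  map_smul' r x := Quotient.inductionOn' x fun u => congrArg Quotient.mk'' (map_smul f r u)

@[simp]
theorem quotMap_mk (f : M →ₗ[R] N) (L : Submodule R M) (m : M) :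
    quotMap f L (Quotient.mk'' m) = Quotient.mk'' (f m) :=
  rfl

theorem quotMap_injective {f : M →ₗ[R] N} (hf : Function.Injective f) (L : Submodule R M) :
    Function.Injective (quotMap f L) := by
  intro x y
  refine Quotient.inductionOn₂' x y fun u v h => ?_
  obtain ⟨a, ha, b, hb, hab⟩ := (quotCon_map_iff f L).1 (Quotient.exact' h)
  exact Quotient.sound' ⟨a, ha, b, hb, hf (by simpa only [map_add] using hab)⟩

theorem saturatedSub_range_quotMap {f : M →ₗ[R] N} (hsat : SaturatedSub (LinearMap.range f))
    (L : Submodule R M) : SaturatedSub (LinearMap.range (quotMap f L)) := by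
  rintro x y ⟨s, hs⟩ ⟨t, ht⟩
  obtain ⟨u, rfl⟩ := Quotient.mk''_surjective x
  obtain ⟨v, rfl⟩ := Quotient.mk''_surjective y
  obtain ⟨s, rfl⟩ := Quotient.mk''_surjective s
  obtain ⟨t, rfl⟩ := Quotient.mk''_surjective t
  obtain ⟨a, -, b, -, hv⟩ := (quotCon_map_iff f L).1 (Quotient.exact' ht)
  obtain ⟨c, -, d, -, huv⟩ :=
    (quotCon_map_iff f L).1 (Quotient.exact' (hs : Quotient.mk'' (f s) = Quotient.mk'' (u + v)))
  have hu : u + f (t + a + d) = f (s + c + b) := by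
    simp only [map_add] at hv huv ⊢
    calc u + (f t + f a + f d) = (f t + f a) + (u + f d) := by abel
      _ = v + f b + (u + f d) := by rw [hv]
      _ = (u + v + f d) + f b := by abel
      _ = f s + f c + f b := by rw [← huv]
  obtain ⟨w, rfl⟩ := hsat u _ ⟨_, hu.symm⟩ ⟨_, rfl⟩
  exact ⟨Quotient.mk'' w, rfl⟩

end

theorem stmt8 {R M N : Type*} [Semiring R] [AddCommMonoid M] [Module R M]
    [AddCommMonoid N] [Module R N]
    (i : M →ₗ[R] N) (hinj : Function.Injective i)
    (hsat : SaturatedSub (LinearMap.range i))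
    (L : Submodule R M) (hL : SaturatedSub L) :
    SaturatedSub (L.map i) ∧
    ∃ i' : (quotCon L).Quotient →ₗ[R] (quotCon (L.map i)).Quotient,
      (∀ m : M, i' (Quotient.mk'' m) = Quotient.mk'' (i m)) ∧
      Function.Injective i' ∧ SaturatedSub (LinearMap.range i') :=
  ⟨hL.map hinj hsat, quotMap i L, quotMap_mk i L, quotMap_injective hinj L,
    saturatedSub_range_quotMap hsat L⟩
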